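/- arXiv:2104.09736 — 4 statements merged into one kernel-verified Lean document; each statement's English description precedes it below -/
import Mathlib

section
/- With a = (0,0,1), b' = (0.6,0.6,0.4), c = (1,1,0) in ℝ³ and reference point r = (-0.5,-0.5,-0.5), the hypervolume contribution of b' to {a, b', c} equals 0.384, which is strictly greater than 0.375, the hypervolume contribution of b = (0.5,0.5,0.5) to {a, b, c}. -/
open MeasureTheory

/-- The hypervolume of a set of points in ℝ³ with respect to a reference point `r`
(maximization): the Lebesgue measure of the union of the boxes `[r, p]`. -/
noncomputable def hv3 (A : Set (Fin 3 → ℝ)) (r : Fin 3 → ℝ) : ENNReal :=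
  volume (⋃ p ∈ A, Set.Icc r p)

/-- The hypervolume contribution of a point `s` to the set `A`. -/
noncomputable def hvc3 (s : Fin 3 → ℝ) (A : Set (Fin 3 → ℝ)) (r : Fin 3 → ℝ) : ENNReal :=
  hv3 A r - hv3 (A \ {s}) r

section aux

lemma vol_box_aux (x y z : ℝ) :
    volume (Set.Icc ![-0.5,-0.5,-0.5] ![x, y, z]) =
      ENNReal.ofReal (x + 0.5) * ENNReal.ofReal (y + 0.5) * ENNReal.ofReal (z + 0.5) := by
  rw [Real.volume_Icc_pi, Fin.prod_univ_three]
  norm_num [Matrix.cons_val_two]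

lemma vol_box (x y z w : ℝ) (hx : 0 ≤ x + 0.5) (hy : 0 ≤ y + 0.5)
    (hw : (x + 0.5) * (y + 0.5) * (z + 0.5) = w) :
    volume (Set.Icc ![-0.5,-0.5,-0.5] ![x, y, z]) = ENNReal.ofReal w := by
  rw [vol_box_aux, ← ENNReal.ofReal_mul hx, ← ENNReal.ofReal_mul (mul_nonneg hx hy), hw]

lemma inter_box (r p q m : Fin 3 → ℝ) (h : p ⊓ q = m) :
    Set.Icc r p ∩ Set.Icc r q = Set.Icc r m := by
  rw [Set.Icc_inter_Icc, sup_idem, h]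

lemma union3_vol {α : Type*} [MeasurableSpace α] (μ : Measure α) (A B C : Set α)
    (hB : MeasurableSet B) (hC : MeasurableSet C) :
    μ (A ∪ B ∪ C) + μ (A ∩ B) + (μ (A ∩ C) + μ (B ∩ C))
      = μ A + μ B + μ C + μ (A ∩ B ∩ C) := by
  have e1 : (A ∪ B) ∩ C = (A ∩ C) ∪ (B ∩ C) := Set.union_inter_distrib_right A B C
  have e2 : (A ∩ C) ∩ (B ∩ C) = A ∩ B ∩ C := by ext x; simp; tauto
  have h1 := measure_union_add_inter (μ := μ) (A ∪ B) hC
  have h2 := measure_union_add_inter (μ := μ) A hB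
  have h3 := measure_union_add_inter (μ := μ) (A ∩ C) (hB.inter hC)
  rw [e2] at h3
  calc μ (A ∪ B ∪ C) + μ (A ∩ B) + (μ (A ∩ C) + μ (B ∩ C))
      = μ (A ∪ B ∪ C) + μ (A ∩ B) + (μ ((A ∩ C) ∪ (B ∩ C)) + μ (A ∩ B ∩ C)) := by
        rw [h3]
    _ = (μ (A ∪ B ∪ C) + μ ((A ∪ B) ∩ C)) + μ (A ∩ B) + μ (A ∩ B ∩ C) := by
        rw [e1]; ring
    _ = (μ (A ∪ B) + μ (A ∩ B)) + μ C + μ (A ∩ B ∩ C) := by rw [h1]; ring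
    _ = μ A + μ B + μ C + μ (A ∩ B ∩ C) := by rw [h2]

lemma solve_eq (X : ENNReal) {s t u : ℝ} (hs : 0 ≤ s) (hst : s ≤ t)
    (hu : u = t - s)
    (h : X + ENNReal.ofReal s = ENNReal.ofReal t) : X = ENNReal.ofReal u := by
  have ht : ENNReal.ofReal t = ENNReal.ofReal u + ENNReal.ofReal s := by
    rw [← ENNReal.ofReal_add (by linarith) hs]
    congr 1; linarith
  rw [ht] at h
  exact WithTop.add_right_cancel ENNReal.ofReal_ne_top h

lemma ofReal_add4 {a b c d e : ℝ} (ha : 0 ≤ a) (hb : 0 ≤ b) (hc : 0 ≤ c) (hd : 0 ≤ d)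
    (h : a + b + c + d = e) :
    ENNReal.ofReal a + ENNReal.ofReal b + ENNReal.ofReal c + ENNReal.ofReal d
      = ENNReal.ofReal e := by
  rw [← ENNReal.ofReal_add ha hb, ← ENNReal.ofReal_add (by linarith) hc,
    ← ENNReal.ofReal_add (by linarith) hd, h]

end aux

section main

noncomputable def rr : Fin 3 → ℝ := ![-0.5,-0.5,-0.5]

lemma hv_pair (p q : Fin 3 → ℝ) :
    hv3 {p, q} rr = volume (Set.Icc rr p ∪ Set.Icc rr q) := by
  unfold hv3
  congr 1
  simp [Set.biUnion_insert]

lemma hv_triple (p q s : Fin 3 → ℝ) :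
    hv3 {p, q, s} rr = volume (Set.Icc rr p ∪ Set.Icc rr q ∪ Set.Icc rr s) := by
  unfold hv3
  congr 1
  simp [Set.biUnion_insert, Set.union_assoc]

lemma hv_ac : hv3 {![0,0,1], ![1,1,0]} rr = ENNReal.ofReal 1.375 := by
  rw [hv_pair]
  have hinter : Set.Icc rr ![0,0,1] ∩ Set.Icc rr ![1,1,0] = Set.Icc rr ![0,0,0] := by
    apply inter_box
    funext i; fin_cases i <;> simp <;> norm_num [min_def]
  have h := measure_union_add_inter (μ := volume) (t := Set.Icc rr ![1,1,0])
    (Set.Icc rr ![0,0,1]) measurableSet_Icc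
  rw [hinter] at h
  rw [show rr = ![-0.5,-0.5,-0.5] from rfl] at h ⊢
  rw [vol_box 0 0 1 0.375 (by norm_num) (by norm_num) (by norm_num),
    vol_box 1 1 0 1.125 (by norm_num) (by norm_num) (by norm_num),
    vol_box 0 0 0 0.125 (by norm_num) (by norm_num) (by norm_num)] at h
  rw [← ENNReal.ofReal_add (by norm_num) (by norm_num)] at h
  exact solve_eq _ (by norm_num) (by norm_num) (by norm_num) h

lemma hv_abc : hv3 {![0,0,1], ![0.5,0.5,0.5], ![1,1,0]} rr = ENNReal.ofReal 1.75 := by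
  rw [hv_triple]
  have h := union3_vol volume (Set.Icc rr ![0,0,1]) (Set.Icc rr ![0.5,0.5,0.5])
    (Set.Icc rr ![1,1,0]) measurableSet_Icc measurableSet_Icc
  have i1 : Set.Icc rr ![0,0,1] ∩ Set.Icc rr ![0.5,0.5,0.5] = Set.Icc rr ![0,0,0.5] := by
    apply inter_box; funext i; fin_cases i <;> simp <;> norm_num [min_def]
  have i2 : Set.Icc rr ![0,0,1] ∩ Set.Icc rr ![1,1,0] = Set.Icc rr ![0,0,0] := by
    apply inter_box; funext i; fin_cases i <;> simp <;> norm_num [min_def]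
  have i3 : Set.Icc rr ![0.5,0.5,0.5] ∩ Set.Icc rr ![1,1,0] = Set.Icc rr ![0.5,0.5,0] := by
    apply inter_box; funext i; fin_cases i <;> simp <;> norm_num [min_def]
  have i4 : Set.Icc rr ![0,0,1] ∩ Set.Icc rr ![0.5,0.5,0.5] ∩ Set.Icc rr ![1,1,0]
      = Set.Icc rr ![0,0,0] := by
    rw [i1]; apply inter_box; funext i; fin_cases i <;> simp <;> norm_num [min_def]
  rw [i4, i1, i2, i3] at h
  rw [show rr = ![-0.5,-0.5,-0.5] from rfl] at h ⊢
  rw [vol_box 0 0 1 0.375 (by norm_num) (by norm_num) (by norm_num),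
    vol_box 0.5 0.5 0.5 1 (by norm_num) (by norm_num) (by norm_num),
    vol_box 1 1 0 1.125 (by norm_num) (by norm_num) (by norm_num),
    vol_box 0 0 0.5 0.25 (by norm_num) (by norm_num) (by norm_num),
    vol_box 0 0 0 0.125 (by norm_num) (by norm_num) (by norm_num),
    vol_box 0.5 0.5 0 0.5 (by norm_num) (by norm_num) (by norm_num)] at h
  rw [ofReal_add4 (by norm_num) (by norm_num) (by norm_num) (by norm_num)
    (show (0.375 : ℝ) + 1 + 1.125 + 0.125 = 2.625 by norm_num)] at h
  rw [← ENNReal.ofReal_add (by norm_num) (by norm_num), add_assoc,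
    ← ENNReal.ofReal_add (by norm_num) (by norm_num)] at h
  exact solve_eq _ (by norm_num) (by norm_num) (by norm_num) h

lemma hv_ab'c : hv3 {![0,0,1], ![0.6,0.6,0.4], ![1,1,0]} rr = ENNReal.ofReal 1.759 := by
  rw [hv_triple]
  have h := union3_vol volume (Set.Icc rr ![0,0,1]) (Set.Icc rr ![0.6,0.6,0.4])
    (Set.Icc rr ![1,1,0]) measurableSet_Icc measurableSet_Icc
  have i1 : Set.Icc rr ![0,0,1] ∩ Set.Icc rr ![0.6,0.6,0.4] = Set.Icc rr ![0,0,0.4] := by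
    apply inter_box; funext i; fin_cases i <;> simp <;> norm_num [min_def]
  have i2 : Set.Icc rr ![0,0,1] ∩ Set.Icc rr ![1,1,0] = Set.Icc rr ![0,0,0] := by
    apply inter_box; funext i; fin_cases i <;> simp <;> norm_num [min_def]
  have i3 : Set.Icc rr ![0.6,0.6,0.4] ∩ Set.Icc rr ![1,1,0] = Set.Icc rr ![0.6,0.6,0] := by
    apply inter_box; funext i; fin_cases i <;> simp <;> norm_num [min_def]
  have i4 : Set.Icc rr ![0,0,1] ∩ Set.Icc rr ![0.6,0.6,0.4] ∩ Set.Icc rr ![1,1,0]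
      = Set.Icc rr ![0,0,0] := by
    rw [i1]; apply inter_box; funext i; fin_cases i <;> simp <;> norm_num [min_def]
  rw [i4, i1, i2, i3] at h
  rw [show rr = ![-0.5,-0.5,-0.5] from rfl] at h ⊢
  rw [vol_box 0 0 1 0.375 (by norm_num) (by norm_num) (by norm_num),
    vol_box 0.6 0.6 0.4 1.089 (by norm_num) (by norm_num) (by norm_num),
    vol_box 1 1 0 1.125 (by norm_num) (by norm_num) (by norm_num),
    vol_box 0 0 0.4 0.225 (by norm_num) (by norm_num) (by norm_num),
    vol_box 0 0 0 0.125 (by norm_num) (by norm_num) (by norm_num),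
    vol_box 0.6 0.6 0 0.605 (by norm_num) (by norm_num) (by norm_num)] at h
  rw [ofReal_add4 (by norm_num) (by norm_num) (by norm_num) (by norm_num)
    (show (0.375 : ℝ) + 1.089 + 1.125 + 0.125 = 2.714 by norm_num)] at h
  rw [← ENNReal.ofReal_add (by norm_num) (by norm_num), add_assoc,
    ← ENNReal.ofReal_add (by norm_num) (by norm_num)] at h
  exact solve_eq _ (by norm_num) (by norm_num) (by norm_num) h

lemma diff_eq (bb : Fin 3 → ℝ) (ha : (![0,0,1] : Fin 3 → ℝ) ≠ bb)
    (hc : (![1,1,0] : Fin 3 → ℝ) ≠ bb) :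
    ({![0,0,1], bb, ![1,1,0]} : Set (Fin 3 → ℝ)) \ {bb}
      = {![0,0,1], ![1,1,0]} := by
  ext x
  simp only [Set.mem_diff, Set.mem_insert_iff, Set.mem_singleton_iff]
  constructor
  · rintro ⟨h1, h2⟩; tauto
  · rintro (h | h) <;> subst h <;> exact ⟨by tauto, by assumption⟩

lemma hvc_b : hvc3 ![0.5,0.5,0.5] {![0,0,1], ![0.5,0.5,0.5], ![1,1,0]} rr
    = ENNReal.ofReal 0.375 := by
  unfold hvc3
  rw [diff_eq _ (fun h => by have := congrFun h 2; norm_num [Matrix.cons_val_two] at this)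
    (fun h => by have := congrFun h 2; norm_num [Matrix.cons_val_two] at this)]
  rw [hv_abc, hv_ac, ← ENNReal.ofReal_sub _ (by norm_num)]
  norm_num

lemma hvc_b' : hvc3 ![0.6,0.6,0.4] {![0,0,1], ![0.6,0.6,0.4], ![1,1,0]} rr
    = ENNReal.ofReal 0.384 := by
  unfold hvc3
  rw [diff_eq _ (fun h => by have := congrFun h 2; norm_num [Matrix.cons_val_two] at this)
    (fun h => by have := congrFun h 2; norm_num [Matrix.cons_val_two] at this)]
  rw [hv_ab'c, hv_ac, ← ENNReal.ofReal_sub _ (by norm_num)]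
  norm_num

end main

theorem stmt_10 :
    let a : Fin 3 → ℝ := ![0, 0, 1]
    let b : Fin 3 → ℝ := ![0.5, 0.5, 0.5]
    let b' : Fin 3 → ℝ := ![0.6, 0.6, 0.4]
    let c : Fin 3 → ℝ := ![1, 1, 0]
    let r : Fin 3 → ℝ := ![-0.5, -0.5, -0.5]
    hvc3 b' {a, b', c} r = ENNReal.ofReal 0.384
    ∧ hvc3 b {a, b, c} r = ENNReal.ofReal 0.375
    ∧ ENNReal.ofReal 0.375 < ENNReal.ofReal 0.384 := by
  refine ⟨hvc_b', hvc_b, ?_⟩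
  rw [ENNReal.ofReal_lt_ofReal_iff (by norm_num)]
  norm_num
end

section
/- Let x, y, z ∈ [0,1] with x + y + z = 2. Then xyz ≤ min{1-xy, 1-xz, 1-yz}, with strict inequality when 0 < x, y, z < 1. -/
theorem stmt_14 (x y z : ℝ) (hsum : x + y + z = 2)
    (hx0 : 0 ≤ x) (hx1 : x ≤ 1) (hy0 : 0 ≤ y) (hy1 : y ≤ 1)
    (hz0 : 0 ≤ z) (hz1 : z ≤ 1) :
    x * y * z ≤ min (min (1 - x * y) (1 - x * z)) (1 - y * z)
    ∧ (0 < x → x < 1 → 0 < y → y < 1 → 0 < z → z < 1 →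
        x * y * z < min (min (1 - x * y) (1 - x * z)) (1 - y * z)) := by
  constructor
  · refine le_min (le_min ?_ ?_) ?_ <;>
      nlinarith [mul_nonneg hx0 hy0, mul_nonneg hx0 hz0, mul_nonneg hy0 hz0,
        mul_nonneg (mul_nonneg hx0 hy0) hz0, sq_nonneg (x-y), sq_nonneg (x-z), sq_nonneg (y-z),
        mul_nonneg (sub_nonneg.2 hx1) (sub_nonneg.2 hy1),
        mul_nonneg (sub_nonneg.2 hx1) (sub_nonneg.2 hz1),
        mul_nonneg (sub_nonneg.2 hy1) (sub_nonneg.2 hz1),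
        mul_nonneg (mul_nonneg (sub_nonneg.2 hx1) (sub_nonneg.2 hy1)) hz0,
        mul_nonneg (mul_nonneg (sub_nonneg.2 hx1) (sub_nonneg.2 hz1)) hy0,
        mul_nonneg (mul_nonneg (sub_nonneg.2 hy1) (sub_nonneg.2 hz1)) hx0]
  · intro hx hx1' hy hy1' hz hz1'
    refine lt_min (lt_min ?_ ?_) ?_ <;>
      nlinarith [mul_pos hx hy, mul_pos hx hz, mul_pos hy hz,
        mul_pos (mul_pos hx hy) hz,
        mul_pos (mul_pos (sub_pos.2 hx1') (sub_pos.2 hy1')) hz,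
        mul_pos (mul_pos (sub_pos.2 hx1') (sub_pos.2 hz1')) hy,
        mul_pos (mul_pos (sub_pos.2 hy1') (sub_pos.2 hz1')) hx]
end

section
/- Let H ≥ 1 and consider the DAS set A = {(a/H, b/H, c/H) : a, b, c ∈ ℕ, a + b + c = H} on the simplex f1 + f2 + f3 = 1, with reference point r = (-1/H, -1/H, -1/H). Then every point of A has the same hypervolume contribution to A. -/
open MeasureTheory

namespace Stmt16Aux

lemma exists_shift (v : Fin 3 → ℕ) (i : Fin 3) (h1 : 1 ≤ v i) :
    ∃ w : Fin 3 → ℕ, w 0 + w 1 + w 2 = v 0 + v 1 + v 2 ∧ w i + 1 = v i ∧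
      ∀ k, k ≠ i → v k ≤ w k := by
  fin_cases i
  · refine ⟨![v 0 - 1, v 1 + 1, v 2], ?_, ?_, ?_⟩
    · simp at h1 ⊢; omega
    · simp at h1 ⊢; omega
    · intro k hk; fin_cases k <;> simp_all
  · refine ⟨![v 0 + 1, v 1 - 1, v 2], ?_, ?_, ?_⟩
    · simp at h1 ⊢; omega
    · simp at h1 ⊢; omega
    · intro k hk; fin_cases k <;> simp_all
  · refine ⟨![v 0 + 1, v 1, v 2 - 1], ?_, ?_, ?_⟩
    · simp at h1 ⊢; omega
    · simp at h1 ⊢; omega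
    · intro k hk; fin_cases k <;> simp_all

lemma tri (i : Fin 3) : i = 0 ∨ i = 1 ∨ i = 2 := by
  fin_cases i
  exacts [Or.inl rfl, Or.inr (Or.inl rfl), Or.inr (Or.inr rfl)]

lemma hyperplane_null (i : Fin 3) (c : ℝ) :
    volume {x : Fin 3 → ℝ | x i = c} = 0 := by
  have heq : {x : Fin 3 → ℝ | x i = c} =
      Set.univ.pi (fun j => if j = i then ({c} : Set ℝ) else Set.univ) := by
    ext x
    simp only [Set.mem_setOf_eq, Set.mem_pi, Set.mem_univ, true_implies]
    constructor
    · intro h j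
      by_cases hj : j = i <;> simp [hj, h]
    · intro h
      have := h i
      simpa using this
  rw [heq, volume_pi_pi]
  exact Finset.prod_eq_zero (Finset.mem_univ i) (by simp)

lemma contrib_eq (H : ℕ) (hH : 1 ≤ H)
    (A : Set (Fin 3 → ℝ))
    (hA : A = {w | ∃ a b c : ℕ, a + b + c = H ∧
        w = ![(a : ℝ) / H, (b : ℝ) / H, (c : ℝ) / H]})
    (r : Fin 3 → ℝ) (hr : r = ![-(1 / (H : ℝ)), -(1 / (H : ℝ)), -(1 / (H : ℝ))])
    (s : Fin 3 → ℝ) (hs : s ∈ A) :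
    hvc3 s A r = (ENNReal.ofReal (1 / (H : ℝ)))^3 := by
  have Hpos : (0:ℝ) < H := by exact_mod_cast hH
  have hri : ∀ i, r i = -(1 / (H : ℝ)) := by
    intro i; fin_cases i <;> simp [hr]
  -- membership characterization
  have hmemA : ∀ p : Fin 3 → ℝ, p ∈ A ↔
      ∃ v : Fin 3 → ℕ, v 0 + v 1 + v 2 = H ∧ ∀ i, p i = (v i : ℝ) / H := by
    intro p
    rw [hA]
    constructor
    · rintro ⟨a, b, c, habc, rfl⟩
      exact ⟨![a, b, c], by simpa using habc, by intro i; fin_cases i <;> simp⟩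
    · rintro ⟨v, hv, hp⟩
      refine ⟨v 0, v 1, v 2, hv, ?_⟩
      funext i; fin_cases i <;> simp [hp]
  obtain ⟨v, hvsum, hsv⟩ := (hmemA s).1 hs
  have hs_nonneg : ∀ i, (0:ℝ) ≤ s i := by
    intro i; rw [hsv i]; positivity
  have hs_le_one : ∀ i, s i ≤ 1 := by
    intro i; rw [hsv i]
    rw [div_le_one Hpos]
    have : v i ≤ H := by rcases tri i with rfl | rfl | rfl <;> omega
    exact_mod_cast this
  set U : Set (Fin 3 → ℝ) := ⋃ p ∈ A, Set.Icc r p with hU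
  set U' : Set (Fin 3 → ℝ) := ⋃ p ∈ A \ {s}, Set.Icc r p with hU'
  have hU'subU : U' ⊆ U := by
    apply Set.biUnion_subset_biUnion_left
    exact Set.diff_subset
  -- countability / measurability
  have hAcount : A.Countable := by
    have : A ⊆ Set.range (fun q : ℕ × ℕ × ℕ =>
        ![(q.1 : ℝ) / H, (q.2.1 : ℝ) / H, (q.2.2 : ℝ) / H]) := by
      rw [hA]; rintro w ⟨a, b, c, -, rfl⟩; exact ⟨⟨a, b, c⟩, rfl⟩
    exact (Set.countable_range _).mono this
  have hU'meas : MeasurableSet U' := by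
    exact MeasurableSet.biUnion (hAcount.mono Set.diff_subset)
      (fun p _ => measurableSet_Icc)
  -- finiteness
  have hUbig : U ⊆ Set.Icc r (fun _ => 1) := by
    rintro x hx
    rw [hU] at hx
    obtain ⟨p, hp, hxp⟩ := Set.mem_iUnion₂.1 hx
    obtain ⟨w, hwsum, hpw⟩ := (hmemA p).1 hp
    refine ⟨hxp.1, fun i => ?_⟩
    refine le_trans (hxp.2 i) ?_
    rw [hpw i, div_le_one Hpos]
    have : w i ≤ H := by rcases tri i with rfl | rfl | rfl <;> omega
    exact_mod_cast this
  have hUfin : volume U ≠ ⊤ := by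
    have : volume U ≤ volume (Set.Icc r (fun _ => 1)) := measure_mono hUbig
    refine ne_top_of_le_ne_top ?_ this
    rw [← Set.pi_univ_Icc, volume_pi_pi]
    exact (ENNReal.prod_lt_top (fun i _ => by simp [Real.volume_Icc])).ne
  have hU'fin : volume U' ≠ ⊤ := ne_top_of_le_ne_top hUfin (measure_mono hU'subU)
  -- contribution as measure of difference
  have hdiff : hvc3 s A r = volume (U \ U') := by
    rw [hvc3, hv3, hv3, ← hU, ← hU']
    exact (measure_diff hU'subU hU'meas.nullMeasurableSet hU'fin).symm
  -- the exclusive cell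
  set E : Set (Fin 3 → ℝ) :=
    Set.univ.pi (fun i => Set.Ioc (s i - 1 / H) (s i)) with hE
  -- key arithmetic: if x i > v i / H - 1/H and x i ≤ w i / H then v i ≤ w i
  have key : ∀ (a b : ℕ) (x : ℝ), (a : ℝ) / H - 1 / H < x → x ≤ (b : ℝ) / H → a ≤ b := by
    intro a b x h1 h2
    have : (a : ℝ) - 1 < b := by
      have := h1.trans_le h2
      rw [div_sub_div_same, div_lt_div_iff_of_pos_right Hpos] at this
      linarith
    have : (a : ℝ) < b + 1 := by linarith
    exact_mod_cast Nat.lt_succ_iff.mp (by exact_mod_cast this)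
  have hEsub : E ⊆ U \ U' := by
    intro x hx
    simp only [hE, Set.mem_pi, Set.mem_univ, true_implies, Set.mem_Ioc] at hx
    constructor
    · refine Set.mem_biUnion hs ⟨fun i => ?_, fun i => (hx i).2⟩
      rw [hri i]
      have := (hx i).1
      have := hs_nonneg i
      linarith
    · intro hxU'
      obtain ⟨p, hp, hxp⟩ := Set.mem_iUnion₂.1 hxU'
      obtain ⟨hpA, hpne⟩ := hp
      obtain ⟨w, hwsum, hpw⟩ := (hmemA p).1 hpA
      have hle : ∀ i, v i ≤ w i := by
        intro i
        refine key _ _ (x i) ?_ ?_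
        · rw [← hsv i]; exact (hx i).1
        · rw [← hpw i]; exact hxp.2 i
      have h0 := hle 0; have h1 := hle 1; have h2 := hle 2
      have heq : w 0 = v 0 ∧ w 1 = v 1 ∧ w 2 = v 2 := by omega
      apply hpne
      simp only [Set.mem_singleton_iff]
      funext i
      rw [hpw i, hsv i]
      rcases tri i with rfl | rfl | rfl
      · rw [heq.1]
      · rw [heq.2.1]
      · rw [heq.2.2]
  set N : Set (Fin 3 → ℝ) := ⋃ i : Fin 3, {x | x i = -(1 / (H : ℝ))} with hN
  have hNnull : volume N = 0 :=
    measure_iUnion_null (fun i => hyperplane_null i _)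
  have hsupE : U \ U' ⊆ E ∪ N := by
    rintro x ⟨hxU, hxU'⟩
    obtain ⟨p, hp, hxp⟩ := Set.mem_iUnion₂.1 hxU
    have hps : p = s := by
      by_contra hne
      exact hxU' (Set.mem_biUnion ⟨hp, hne⟩ hxp)
    rw [hps] at hxp
    by_cases hxN : x ∈ N
    · exact Or.inr hxN
    left
    have hxgt : ∀ i, -(1 / (H : ℝ)) < x i := by
      intro i
      have h0 : r i ≤ x i := hxp.1 i
      rw [hri i] at h0
      rcases lt_or_eq_of_le h0 with h | h
      · exact h
      · exact absurd (Set.mem_iUnion.2 ⟨i, h.symm⟩) hxN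
    simp only [hE, Set.mem_pi, Set.mem_univ, true_implies, Set.mem_Ioc]
    intro i
    refine ⟨?_, hxp.2 i⟩
    by_contra hcon
    push_neg at hcon
    -- x i ≤ s i - 1/H, so v i ≥ 1 and x is covered by a shifted point
    have hvi1 : 1 ≤ v i := by
      by_contra hvi
      have hvi0 : v i = 0 := by omega
      have := hxgt i
      rw [hsv i, hvi0] at hcon
      simp only [Nat.cast_zero, zero_div, zero_sub] at hcon
      linarith
    obtain ⟨w, hwsum, hwi, hwk⟩ := exists_shift v i hvi1
    set p' : Fin 3 → ℝ := fun k => (w k : ℝ) / H with hp'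
    have hp'A : p' ∈ A := (hmemA p').2 ⟨w, by omega, fun k => rfl⟩
    have hp'ne : p' ≠ s := by
      intro h
      have h2 : (w i : ℝ) / H = (v i : ℝ) / H := by
        have := congrFun h i
        rw [hsv i] at this
        exact this
      field_simp at h2
      have h3 : w i = v i := by exact_mod_cast h2
      omega
    apply hxU'
    refine Set.mem_biUnion ⟨hp'A, hp'ne⟩ ⟨hxp.1, fun k => ?_⟩
    by_cases hk : k = i
    · subst hk
      show x k ≤ (w k : ℝ) / H
      have heq1 : (w k : ℝ) / H = (v k : ℝ) / H - 1 / H := by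
        rw [div_sub_div_same]
        congr 1
        have : ((w k : ℕ) : ℝ) + 1 = ((v k : ℕ) : ℝ) := by exact_mod_cast hwi
        linarith
      rw [heq1, ← hsv k]
      exact hcon
    · refine le_trans (hxp.2 k) ?_
      rw [hsv k]
      show (v k : ℝ) / H ≤ (w k : ℝ) / H
      have : (v k : ℝ) ≤ w k := by exact_mod_cast hwk k hk
      exact div_le_div_of_nonneg_right this Hpos.le
  -- measure computation
  have hEvol : volume E = (ENNReal.ofReal (1 / (H : ℝ)))^3 := by
    rw [hE, volume_pi_pi]
    have : ∀ i : Fin 3, volume (Set.Ioc (s i - 1 / (H:ℝ)) (s i)) =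
        ENNReal.ofReal (1 / (H : ℝ)) := by
      intro i; rw [Real.volume_Ioc]; ring_nf
    rw [Finset.prod_congr rfl (fun i _ => this i)]
    simp [Finset.prod_const]
  have : volume (U \ U') = volume E := by
    apply le_antisymm
    · calc volume (U \ U') ≤ volume (E ∪ N) := measure_mono hsupE
        _ ≤ volume E + volume N := measure_union_le _ _
        _ = volume E := by rw [hNnull, add_zero]
    · exact measure_mono hEsub
  rw [hdiff, this, hEvol]

end Stmt16Aux

theorem stmt_16 (H : ℕ) (hH : 1 ≤ H) :
    let A : Set (Fin 3 → ℝ) :=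
      {w | ∃ a b c : ℕ, a + b + c = H ∧
        w = ![(a : ℝ) / H, (b : ℝ) / H, (c : ℝ) / H]}
    let r : Fin 3 → ℝ := ![-(1 / (H : ℝ)), -(1 / (H : ℝ)), -(1 / (H : ℝ))]
    ∀ s ∈ A, ∀ t ∈ A, hvc3 s A r = hvc3 t A r := by
  intro A r s hs t ht
  rw [Stmt16Aux.contrib_eq H hH A rfl r rfl s hs,
      Stmt16Aux.contrib_eq H hH A rfl r rfl t ht]
end

section
/- Let μ > 3 and suppose μ₁ ≥ 2 points are uniformly spaced on the segment from (1,0,0) to (0,0,1) (in the plane f2 = 0) and μ₂ ≥ 1 points are uniformly spaced on the segment from (1,0,0) to (0,1,0) (in the plane f3 = 0), sharing the endpoint (1,0,0) counted once (total μ = μ₁ + μ₂ points). With reference point r = (r, r, r), r < 0, the total three-dimensional hypervolume decomposes as HV = |r|·HV₁^{f1-f3} + |r|·HV₂^{f1-f2}, where HV₁^{f1-f3} is the two-dimensional hypervolume of the projections of the first-line points with reference point (r, r), and HV₂^{f1-f2} is the two-dimensional hypervolume of the projections of the second-line points with reference point (r, 0). -/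
open MeasureTheory

/-- The two-dimensional hypervolume of a set of points in ℝ² with respect to a
reference point `r`. -/
noncomputable def hv2 (A : Set (ℝ × ℝ)) (r : ℝ × ℝ) : ENNReal :=
  volume (⋃ p ∈ A, Set.Icc r p)

set_option maxHeartbeats 1000000 in
theorem stmt_19 (μ₁ μ₂ : ℕ) (h1 : 2 ≤ μ₁) (h2 : 1 ≤ μ₂) (hμ : 3 < μ₁ + μ₂)
    (r : ℝ) (hr : r < 0) :
    -- μ₁ points uniformly spaced from (1,0,0) to (0,0,1) in the plane f2 = 0
    let A : Set (Fin 3 → ℝ) :=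
      (fun i : ℕ => ![1 - (i : ℝ) / ((μ₁ : ℝ) - 1), 0, (i : ℝ) / ((μ₁ : ℝ) - 1)]) ''
        Set.Iio μ₁
    -- μ₂ points uniformly spaced on the segment from (1,0,0) to (0,1,0) in the
    -- plane f3 = 0, excluding the shared endpoint (1,0,0)
    let B : Set (Fin 3 → ℝ) :=
      (fun j : ℕ => ![1 - (j : ℝ) / (μ₂ : ℝ), (j : ℝ) / (μ₂ : ℝ), 0]) '' Set.Icc 1 μ₂
    hv3 (A ∪ B) ![r, r, r]
      = ENNReal.ofReal |r| * hv2 ((fun p => (p 0, p 2)) '' A) (r, r)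
        + ENNReal.ofReal |r| * hv2 ((fun p => (p 0, p 1)) '' B) (r, 0) := by
  intro A B
  set A' : Set (ℝ × ℝ) := (fun p => (p 0, p 2)) '' A with hA'def
  set B' : Set (ℝ × ℝ) := (fun p => (p 0, p 1)) '' B with hB'def
  set U₁ : Set (ℝ × ℝ) := ⋃ q ∈ A', Set.Icc ((r, r) : ℝ × ℝ) q with hU₁def
  set U₂ : Set (ℝ × ℝ) := ⋃ q ∈ B', Set.Icc ((r, 0) : ℝ × ℝ) q with hU₂def
  set T₁ : Set (Fin 3 → ℝ) := {x | x 1 ∈ Set.Icc r 0 ∧ (x 0, x 2) ∈ U₁} with hT₁def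
  set T₂ : Set (Fin 3 → ℝ) := {x | x 2 ∈ Set.Icc r 0 ∧ (x 0, x 1) ∈ U₂} with hT₂def
  -- the key point (1,0) ∈ A'
  have h10 : ((1 : ℝ), (0 : ℝ)) ∈ A' := by
    refine ⟨![1 - (0 : ℝ) / ((μ₁ : ℝ) - 1), 0, (0 : ℝ) / ((μ₁ : ℝ) - 1)], ⟨0, ?_, by norm_num⟩, ?_⟩
    · exact Set.mem_Iio.mpr (by omega)
    · simp
  -- the decomposition of the dominated region
  have hS : (⋃ p ∈ A ∪ B, Set.Icc ![r, r, r] p) = T₁ ∪ T₂ := by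
    ext x
    simp only [Set.mem_iUnion, Set.mem_union, exists_prop]
    constructor
    · rintro ⟨p, hpAB | hpB, hx⟩
      · -- p ∈ A
        obtain ⟨i, hi, rfl⟩ := hpAB
        rw [Set.mem_Icc] at hx
        have hl := hx.1
        have hu := hx.2
        rw [Pi.le_def] at hl hu
        have hl0 := hl 0; have hl1 := hl 1; have hl2 := hl 2
        have hu0 := hu 0; have hu1 := hu 1; have hu2 := hu 2
        simp only [Matrix.cons_val_zero, Matrix.cons_val_one, Matrix.head_cons,
          Matrix.cons_val_two, Matrix.tail_cons] at hl0 hl1 hl2 hu0 hu1 hu2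
        left
        refine ⟨⟨hl1, hu1⟩, ?_⟩
        refine Set.mem_biUnion (⟨_, ⟨i, hi, rfl⟩, rfl⟩ : (_, _) ∈ A') ?_
        rw [Set.mem_Icc]
        constructor
        · exact ⟨hl0, hl2⟩
        · constructor
          · simpa using hu0
          · simpa using hu2
      · -- p ∈ B
        obtain ⟨j, hj, rfl⟩ := hpB
        rw [Set.mem_Icc] at hx
        have hl := hx.1
        have hu := hx.2
        rw [Pi.le_def] at hl hu
        have hl0 := hl 0; have hl1 := hl 1; have hl2 := hl 2
        have hu0 := hu 0; have hu1 := hu 1; have hu2 := hu 2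
        simp only [Matrix.cons_val_zero, Matrix.cons_val_one, Matrix.head_cons,
          Matrix.cons_val_two, Matrix.tail_cons] at hl0 hl1 hl2 hu0 hu1 hu2
        rcases le_or_gt (x 1) 0 with hx1 | hx1
        · -- below the plane f2 = 0: inside the box of (1,0) ∈ A'
          left
          refine ⟨⟨hl1, hx1⟩, ?_⟩
          refine Set.mem_biUnion h10 ?_
          rw [Set.mem_Icc]
          refine ⟨⟨hl0, hl2⟩, ?_, hu2⟩
          have hj0 : (0 : ℝ) ≤ (j : ℝ) / (μ₂ : ℝ) := by positivity
          calc x 0 ≤ 1 - (j : ℝ) / (μ₂ : ℝ) := hu0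
            _ ≤ 1 := by linarith
        · -- above the plane
          right
          refine ⟨⟨hl2, hu2⟩, ?_⟩
          refine Set.mem_biUnion (⟨_, ⟨j, hj, rfl⟩, rfl⟩ : (_, _) ∈ B') ?_
          rw [Set.mem_Icc]
          constructor
          · exact ⟨hl0, hx1.le⟩
          · constructor
            · simpa using hu0
            · simpa using hu1
    · rintro (⟨hx1, hx02⟩ | ⟨hx2, hx01⟩)
      · obtain ⟨q, hq, hxq⟩ := Set.mem_iUnion₂.mp hx02
        obtain ⟨p, hpA, rfl⟩ := hq
        obtain ⟨i, hi, rfl⟩ := hpA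
        rw [Set.mem_Icc] at hxq
        refine ⟨_, Or.inl ⟨i, hi, rfl⟩, Set.mem_Icc.mpr ⟨?_, ?_⟩⟩ <;>
        · intro k
          fin_cases k <;>
            simp_all [Prod.le_def]
      · obtain ⟨q, hq, hxq⟩ := Set.mem_iUnion₂.mp hx01
        obtain ⟨p, hpB, rfl⟩ := hq
        obtain ⟨j, hj, rfl⟩ := hpB
        rw [Set.mem_Icc] at hxq
        refine ⟨_, Or.inr ⟨j, hj, rfl⟩, Set.mem_Icc.mpr ⟨?_, ?_⟩⟩ <;>
        · intro k
          obtain ⟨⟨ha, hb⟩, hc, hd⟩ := hxq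
          obtain ⟨he, hf⟩ := hx2
          dsimp only at ha hb hc hd
          fin_cases k <;>
            simp at hc hd ⊢
          <;> linarith
      
  -- measurability
  have hU₁m : MeasurableSet U₁ := by
    refine MeasurableSet.biUnion ?_ fun q _ => measurableSet_Icc
    exact ((Set.to_countable _).image _).image _
  have hU₂m : MeasurableSet U₂ := by
    refine MeasurableSet.biUnion ?_ fun q _ => measurableSet_Icc
    exact ((Set.to_countable _).image _).image _
  -- measure-preserving maps
  have mp1 : MeasurePreserving
      (fun x : Fin 3 → ℝ => (x 1, (x 0, x 2))) volume
      ((volume : Measure ℝ).prod ((volume : Measure ℝ).prod volume)) := by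
    have e1 := MeasureTheory.volume_preserving_piFinSuccAbove (fun _ : Fin 3 => ℝ) 1
    have e2 := (MeasurePreserving.id (volume : Measure ℝ)).prod (μc := (volume : Measure (Fin 2 → ℝ)))
      (MeasureTheory.volume_preserving_finTwoArrow ℝ)
    exact e2.comp e1
  have mp2 : MeasurePreserving
      (fun x : Fin 3 → ℝ => (x 2, (x 0, x 1))) volume
      ((volume : Measure ℝ).prod ((volume : Measure ℝ).prod volume)) := by
    have e1 := MeasureTheory.volume_preserving_piFinSuccAbove (fun _ : Fin 3 => ℝ) 2
    have e2 := (MeasurePreserving.id (volume : Measure ℝ)).prod (μc := (volume : Measure (Fin 2 → ℝ)))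
      (MeasureTheory.volume_preserving_finTwoArrow ℝ)
    exact e2.comp e1
  -- volumes of the two slabs
  have hT₁eq : T₁ = (fun x : Fin 3 → ℝ => (x 1, (x 0, x 2))) ⁻¹' (Set.Icc r 0 ×ˢ U₁) := by
    ext x; simp [hT₁def, Set.mem_prod]
  have hT₂eq : T₂ = (fun x : Fin 3 → ℝ => (x 2, (x 0, x 1))) ⁻¹' (Set.Icc r 0 ×ˢ U₂) := by
    ext x; simp [hT₂def, Set.mem_prod]
  have hvolU₁ : (volume : Measure (ℝ × ℝ)) U₁ = ((volume : Measure ℝ).prod volume) U₁ := by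
    rw [MeasureTheory.Measure.volume_eq_prod]
  have hvolU₂ : (volume : Measure (ℝ × ℝ)) U₂ = ((volume : Measure ℝ).prod volume) U₂ := by
    rw [MeasureTheory.Measure.volume_eq_prod]
  have hT₁vol : volume T₁ = ENNReal.ofReal |r| * hv2 A' (r, r) := by
    rw [hT₁eq, mp1.measure_preimage
      ((measurableSet_Icc.prod hU₁m).nullMeasurableSet),
      Measure.prod_prod, Real.volume_Icc, hv2, ← hU₁def, hvolU₁]
    congr 1
    rw [abs_of_neg hr]; ring_nf
  have hT₂vol : volume T₂ = ENNReal.ofReal |r| * hv2 B' (r, 0) := by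
    rw [hT₂eq, mp2.measure_preimage
      ((measurableSet_Icc.prod hU₂m).nullMeasurableSet),
      Measure.prod_prod, Real.volume_Icc, hv2, ← hU₂def, hvolU₂]
    congr 1
    rw [abs_of_neg hr]; ring_nf
  -- the two slabs are a.e. disjoint
  have hplane : volume {x : Fin 3 → ℝ | x 1 = 0} = 0 := by
    have : {x : Fin 3 → ℝ | x 1 = 0}
        = (fun x : Fin 3 → ℝ => (x 1, (x 0, x 2))) ⁻¹' (({0} : Set ℝ) ×ˢ Set.univ) := by
      ext x; simp [eq_comm]
    rw [this, mp1.measure_preimage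
      (((measurableSet_singleton 0).prod MeasurableSet.univ).nullMeasurableSet),
      Measure.prod_prod, Real.volume_singleton, zero_mul]
  have hdisj : AEDisjoint volume T₁ T₂ := by
    refine measure_mono_null ?_ hplane
    rintro x ⟨⟨hx1 : x 1 ∈ Set.Icc r 0, _⟩, ⟨_, hx01⟩⟩
    obtain ⟨q, hq, hxq⟩ := Set.mem_iUnion₂.mp hx01
    rw [Set.mem_Icc] at hxq
    have h1 : x 1 ≤ 0 := hx1.2
    have h2 : (0 : ℝ) ≤ x 1 := hxq.1.2
    exact le_antisymm h1 h2
  have hT₂m : NullMeasurableSet T₂ volume := by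
    rw [hT₂eq]
    exact ((mp2.measurable (measurableSet_Icc.prod hU₂m))).nullMeasurableSet
  -- put everything together
  rw [hv3, hS, measure_union₀ hT₂m hdisj, hT₁vol, hT₂vol]
end
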